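/- arXiv:2605.22578 — 6 statements merged into one kernel-verified Lean document; each statement's English description precedes it below -/
import Mathlib

section
/- For any finite sequences x, y, z of points in a metric space (E, d), any c > 0 and any 1 ≤ p < ∞, the SOSPA distance satisfies the triangle inequality: d_SOSPA^{(c,p)}(x, y) ≤ d_SOSPA^{(c,p)}(x, z) + d_SOSPA^{(c,p)}(z, y). -/
open scoped BigOperators

/-- A polyline: a finite sequence of points of `E`, given by its length and an
indexing function. -/
def Polyline (E : Type*) : Type _ := Σ n : ℕ, Fin n → E

/-- An ordered assignment set between `{1,…,n}` and `{1,…,m}`: each first index and each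
second index appears at most once, and the pairs respect a strictly increasing order. -/
def IsOrderedAssignment {n m : ℕ} (θ : Finset (Fin n × Fin m)) : Prop :=
  ∀ a ∈ θ, ∀ b ∈ θ, (a.1 < b.1 ↔ a.2 < b.2)

/-- A (not necessarily ordered) assignment set: each first index and each second index
appears at most once. -/
def IsAssignment {n m : ℕ} (θ : Finset (Fin n × Fin m)) : Prop :=
  ∀ a ∈ θ, ∀ b ∈ θ, (a.1 = b.1 ↔ a.2 = b.2)

/-- The assignment cost `C(θ, x, y)` of an assignment set `θ` between polylines `x` and `y`. -/
noncomputable def cost {E : Type*} [MetricSpace E] (c p : ℝ) (x y : Polyline E)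
    (θ : Finset (Fin x.1 × Fin y.1)) : ℝ :=
  (∑ ij ∈ θ, dist (x.2 ij.1) (y.2 ij.2) ^ p
    + c ^ p / 2 * ((x.1 : ℝ) + (y.1 : ℝ) - 2 * (θ.card : ℝ))) ^ (1 / p)

/-- The SOSPA distance: the minimum assignment cost over all ordered assignment sets. -/
noncomputable def dSOSPA {E : Type*} [MetricSpace E] (c p : ℝ) (x y : Polyline E) : ℝ :=
  ⨅ θ : {θ : Finset (Fin x.1 × Fin y.1) // IsOrderedAssignment θ}, cost c p x y θ.1

/-- The normalized SOSPA, valued in `[0,1]`, with the convention that it is `0` when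
both polylines are empty. -/
noncomputable def dSOSPAn {E : Type*} [MetricSpace E] (c p : ℝ) (x y : Polyline E) : ℝ :=
  if x.1 = 0 ∧ y.1 = 0 then 0
  else 2 * dSOSPA c p x y /
    ((c ^ p / 2 * ((x.1 : ℝ) + (y.1 : ℝ))) ^ (1 / p) + dSOSPA c p x y)

/-- The cost of a trace `T` (an ordered assignment set) for the generalized edit distance
with substitution costs `γsub`, deletion costs `γdel`, and insertion costs `γins`. -/
noncomputable def traceCost {n m : ℕ} (γsub : Fin n → Fin m → ℝ) (γdel : Fin n → ℝ)
    (γins : Fin m → ℝ) (T : Finset (Fin n × Fin m)) : ℝ :=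
  ∑ ij ∈ T, γsub ij.1 ij.2
    + ∑ i ∈ Finset.univ.filter (fun i => ∀ j, (i, j) ∉ T), γdel i
    + ∑ j ∈ Finset.univ.filter (fun j => ∀ i, (i, j) ∉ T), γins j

/-- The composition `θ₁ ∘ θ₂` of two assignment sets. -/
def composeAssignment {n k m : ℕ} (θ₁ : Finset (Fin n × Fin k)) (θ₂ : Finset (Fin k × Fin m)) :
    Finset (Fin n × Fin m) :=
  Finset.univ.filter fun im => ∃ j, (im.1, j) ∈ θ₁ ∧ (j, im.2) ∈ θ₂

/-- The cyclic shift `S_s(x)` of a polyline `x`: the `k`-th point of `S_s(x)` is the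
`⟨k+s⟩_{|x|}`-th point of `x`. -/
def shift {E : Type*} (s : ℕ) (x : Polyline E) : Polyline E :=
  ⟨x.1, fun i => x.2 ⟨((i : ℕ) + s) % x.1, Nat.mod_lt _ i.pos⟩⟩

/-- A probabilistic polyline set: a finite indexed family of confidence–polyline pairs,
with confidences in `[0,1]`. -/
structure PPSet (E : Type*) where
  n : ℕ
  r : Fin n → ℝ
  poly : Fin n → Polyline E
  r_nonneg : ∀ i, 0 ≤ r i
  r_le_one : ∀ i, r i ≤ 1

/-- `R_X`, the total confidence of a probabilistic polyline set. -/
noncomputable def totalR {E : Type*} (X : PPSet E) : ℝ := ∑ i, X.r i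

/-- The DAP distance `d_PLD^{(c,p)}` between two probabilistic polyline sets. -/
noncomputable def dPLD {E : Type*} [MetricSpace E] (c p : ℝ) (X Y : PPSet E) : ℝ :=
  (⨅ θ : {θ : Finset (Fin X.n × Fin Y.n) // IsAssignment θ},
    (∑ ij ∈ θ.1, (min (X.r ij.1) (Y.r ij.2) * dSOSPAn c p (X.poly ij.1) (Y.poly ij.2) ^ p
        + |X.r ij.1 - Y.r ij.2| / 2)
      + (∑ i ∈ Finset.univ.filter (fun i => ∀ j, (i, j) ∉ θ.1), X.r i
          + ∑ j ∈ Finset.univ.filter (fun j => ∀ i, (i, j) ∉ θ.1), Y.r j) / 2)) ^ (1 / p)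

/-- The DAP similarity (for `p = 1`). -/
noncomputable def SPLD {E : Type*} [MetricSpace E] (c : ℝ) (X Y : PPSet E) : ℝ :=
  ((totalR X + totalR Y) / 2 - dPLD c 1 X Y) / 2

/-- The normalized DAP, with the convention that it equals `0` when the denominator is `0`. -/
noncomputable def dPLDn {E : Type*} [MetricSpace E] (c p : ℝ) (X Y : PPSet E) : ℝ :=
  if ((totalR X + totalR Y) / 2) ^ (1 / p) + dPLD c p X Y = 0 then 0
  else 2 * dPLD c p X Y / (((totalR X + totalR Y) / 2) ^ (1 / p) + dPLD c p X Y)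

/-- The multiset of confidence–polyline pairs of a probabilistic polyline set. -/
def PPSet.toMultiset {E : Type*} (X : PPSet E) : Multiset (ℝ × Polyline E) :=
  Finset.univ.val.map fun i => (X.r i, X.poly i)

/-!
Compose optimal ordered assignments `θ₁ : x → z` and `θ₂ : z → y`. The assigned pairs of the
composite come from chains `x_i ↦ z_j ↦ y_l`, whose cost `d(x_i, y_l)` is bounded by the triangle
inequality in `E`. Viewing each cost as an `ℓ^p` norm over the chains plus one coordinate carrying
the penalty for unassigned points, Minkowski's inequality finishes the proof once the penalty of
the composite is bounded: by inclusion–exclusion in `z`, `|θ₁| + |θ₂| ≤ |z| + #chains`.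
-/

open Finset

theorem IsOrderedAssignment.isAssignment {n m : ℕ} {θ : Finset (Fin n × Fin m)}
    (h : IsOrderedAssignment θ) : IsAssignment θ := by
  intro a ha b hb
  have hab := h a ha b hb
  have hba := h b hb a ha
  constructor <;> intro e <;> by_contra hne <;> rcases Ne.lt_or_gt hne with hlt | hlt
  · exact (hab.2 hlt).ne e
  · exact (hba.2 hlt).ne' e
  · exact (hab.1 hlt).ne e
  · exact (hba.1 hlt).ne' e

theorem IsOrderedAssignment.composeAssignment {n k m : ℕ} {θ₁ : Finset (Fin n × Fin k)}
    {θ₂ : Finset (Fin k × Fin m)} (h₁ : IsOrderedAssignment θ₁) (h₂ : IsOrderedAssignment θ₂) :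
    IsOrderedAssignment (composeAssignment θ₁ θ₂) := by
  rintro ⟨i, l⟩ ha ⟨i', l'⟩ hb
  obtain ⟨j, hij, hjl⟩ := (mem_filter.1 ha).2
  obtain ⟨j', hij', hjl'⟩ := (mem_filter.1 hb).2
  exact (h₁ _ hij _ hij').trans (h₂ _ hjl _ hjl')

namespace IsAssignment

variable {n m : ℕ} {θ : Finset (Fin n × Fin m)}

theorem injOn_fst (h : IsAssignment θ) : Set.InjOn Prod.fst (θ : Set (Fin n × Fin m)) :=
  fun a ha b hb e => Prod.ext e ((h a ha b hb).1 e)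

theorem injOn_snd (h : IsAssignment θ) : Set.InjOn Prod.snd (θ : Set (Fin n × Fin m)) :=
  fun a ha b hb e => Prod.ext ((h a ha b hb).2 e) e

theorem card_le_left (h : IsAssignment θ) : #θ ≤ n := by
  simpa [card_image_of_injOn h.injOn_fst] using card_le_univ (θ.image Prod.fst)

theorem card_le_right (h : IsAssignment θ) : #θ ≤ m := by
  simpa [card_image_of_injOn h.injOn_snd] using card_le_univ (θ.image Prod.snd)

theorem two_mul_card_le_add (h : IsAssignment θ) : (2 * #θ : ℝ) ≤ n + m := by
  have := h.card_le_left
  have := h.card_le_right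
  norm_cast
  omega

theorem composeAssignment {k : ℕ} {θ₁ : Finset (Fin n × Fin k)} {θ₂ : Finset (Fin k × Fin m)}
    (h₁ : IsAssignment θ₁) (h₂ : IsAssignment θ₂) : IsAssignment (composeAssignment θ₁ θ₂) := by
  rintro ⟨i, l⟩ ha ⟨i', l'⟩ hb
  obtain ⟨j, hij, hjl⟩ := (mem_filter.1 ha).2
  obtain ⟨j', hij', hjl'⟩ := (mem_filter.1 hb).2
  exact (h₁ _ hij _ hij').trans (h₂ _ hjl _ hjl')

end IsAssignment

def composablePairs {n k m : ℕ} (θ₁ : Finset (Fin n × Fin k)) (θ₂ : Finset (Fin k × Fin m)) :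
    Finset ((Fin n × Fin k) × (Fin k × Fin m)) :=
  (θ₁ ×ˢ θ₂).filter fun ab => ab.1.2 = ab.2.1

section composablePairs

variable {n k m : ℕ} {θ₁ : Finset (Fin n × Fin k)} {θ₂ : Finset (Fin k × Fin m)}

theorem mem_composablePairs {ab : (Fin n × Fin k) × (Fin k × Fin m)} :
    ab ∈ composablePairs θ₁ θ₂ ↔ ab.1 ∈ θ₁ ∧ ab.2 ∈ θ₂ ∧ ab.1.2 = ab.2.1 := by
  simp [composablePairs, and_assoc]

theorem image_composablePairs :
    (composablePairs θ₁ θ₂).image (fun ab => (ab.1.1, ab.2.2)) = composeAssignment θ₁ θ₂ := by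
  ext ⟨i, l⟩
  simp only [mem_image, mem_composablePairs, composeAssignment, mem_filter, mem_univ, true_and]
  constructor
  · rintro ⟨⟨⟨i', j⟩, ⟨j', l'⟩⟩, ⟨hij, hjl, hj⟩, he⟩
    simp only [Prod.mk.injEq] at hj he
    obtain ⟨rfl, rfl⟩ := he
    subst hj
    exact ⟨j, hij, hjl⟩
  · rintro ⟨j, hij, hjl⟩
    exact ⟨((i, j), (j, l)), ⟨hij, hjl, rfl⟩, rfl⟩

theorem injOn_ends_composablePairs (h₁ : IsAssignment θ₁) :
    Set.InjOn (fun ab : (Fin n × Fin k) × (Fin k × Fin m) => (ab.1.1, ab.2.2))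
      (composablePairs θ₁ θ₂ : Set ((Fin n × Fin k) × (Fin k × Fin m))) := by
  rintro ⟨a, b⟩ hab ⟨a', b'⟩ hab' e
  obtain ⟨ha, hb, hj⟩ := mem_composablePairs.1 hab
  obtain ⟨ha', hb', hj'⟩ := mem_composablePairs.1 hab'
  obtain ⟨e₁, e₂⟩ := Prod.ext_iff.1 e
  have haa' : a = a' := h₁.injOn_fst ha ha' e₁
  subst haa'
  exact Prod.ext rfl (Prod.ext (hj.symm.trans hj') e₂)

theorem sum_composablePairs_fst_le (h₂ : IsAssignment θ₂) (f : Fin n × Fin k → ℝ)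
    (hf : ∀ a, 0 ≤ f a) : ∑ ab ∈ composablePairs θ₁ θ₂, f ab.1 ≤ ∑ a ∈ θ₁, f a := by
  have hinj : Set.InjOn Prod.fst
      (composablePairs θ₁ θ₂ : Set ((Fin n × Fin k) × (Fin k × Fin m))) := by
    rintro ⟨a, b⟩ hab ⟨a', b'⟩ hab' (rfl : a = a')
    obtain ⟨-, hb, hj⟩ := mem_composablePairs.1 hab
    obtain ⟨-, hb', hj'⟩ := mem_composablePairs.1 hab'
    exact Prod.ext rfl (h₂.injOn_fst hb hb' (hj.symm.trans hj'))
  rw [← sum_image hinj]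
  refine sum_le_sum_of_subset_of_nonneg ?_ fun a _ _ => hf a
  intro a ha
  obtain ⟨ab, hab, rfl⟩ := mem_image.1 ha
  exact (mem_composablePairs.1 hab).1

theorem sum_composablePairs_snd_le (h₁ : IsAssignment θ₁) (f : Fin k × Fin m → ℝ)
    (hf : ∀ b, 0 ≤ f b) : ∑ ab ∈ composablePairs θ₁ θ₂, f ab.2 ≤ ∑ b ∈ θ₂, f b := by
  have hinj : Set.InjOn Prod.snd
      (composablePairs θ₁ θ₂ : Set ((Fin n × Fin k) × (Fin k × Fin m))) := by
    rintro ⟨a, b⟩ hab ⟨a', b'⟩ hab' (rfl : b = b')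
    obtain ⟨ha, -, hj⟩ := mem_composablePairs.1 hab
    obtain ⟨ha', -, hj'⟩ := mem_composablePairs.1 hab'
    exact Prod.ext (h₁.injOn_snd ha ha' (hj.trans hj'.symm)) rfl
  rw [← sum_image hinj]
  refine sum_le_sum_of_subset_of_nonneg ?_ fun b _ _ => hf b
  intro b hb
  obtain ⟨ab, hab, rfl⟩ := mem_image.1 hb
  exact (mem_composablePairs.1 hab).2.1

/-- Inclusion–exclusion in `Fin k`: the middle indices hit by `θ₁` and those used by `θ₂` overlap
only in middle indices of composable pairs. -/
theorem card_add_card_le_card_composablePairs (h₁ : IsAssignment θ₁) (h₂ : IsAssignment θ₂) :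
    #θ₁ + #θ₂ ≤ k + #(composablePairs θ₁ θ₂) := by
  set S := θ₁.image Prod.snd
  set T := θ₂.image Prod.fst
  have hinter : S ∩ T ⊆ (composablePairs θ₁ θ₂).image fun ab => ab.1.2 := by
    intro j hj
    obtain ⟨⟨a, ha, rfl⟩, ⟨b, hb, hjb⟩⟩ := And.imp mem_image.1 mem_image.1 (mem_inter.1 hj)
    exact mem_image.2 ⟨(a, b), mem_composablePairs.2 ⟨ha, hb, hjb.symm⟩, rfl⟩
  calc #θ₁ + #θ₂ = #S + #T := by
        rw [card_image_of_injOn h₁.injOn_snd, card_image_of_injOn h₂.injOn_fst]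
    _ = #(S ∪ T) + #(S ∩ T) := (card_union_add_card_inter S T).symm
    _ ≤ k + #(composablePairs θ₁ θ₂) := by
        gcongr
        · simpa using card_le_univ (S ∪ T)
        · exact (card_le_card hinter).trans card_image_le

end composablePairs

theorem Real.Lp_add_le_of_nonneg_add_rpow {ι : Type*} (s : Finset ι) {f g : ι → ℝ} {a b p : ℝ}
    (hp : 1 ≤ p) (hf : ∀ i ∈ s, 0 ≤ f i) (hg : ∀ i ∈ s, 0 ≤ g i) (ha : 0 ≤ a) (hb : 0 ≤ b) :
    (∑ i ∈ s, (f i + g i) ^ p + (a + b) ^ p) ^ (1 / p) ≤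
      (∑ i ∈ s, f i ^ p + a ^ p) ^ (1 / p) + (∑ i ∈ s, g i ^ p + b ^ p) ^ (1 / p) := by
  have key := Real.Lp_add_le_of_nonneg (s := insertNone s) (f := fun i => i.elim a f)
    (g := fun i => i.elim b g) hp
    (by rintro (_ | i) hi; exacts [ha, hf i (some_mem_insertNone.1 hi)])
    (by rintro (_ | i) hi; exacts [hb, hg i (some_mem_insertNone.1 hi)])
  simpa only [sum_insertNone, Option.elim_none, Option.elim_some, add_comm ((_ : ℝ) ^ p)] using key

theorem cost_composeAssignment_le {E : Type*} [MetricSpace E] {c p : ℝ} (hc : 0 ≤ c)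
    (hp : 1 ≤ p) (x z y : Polyline E) {θ₁ : Finset (Fin x.1 × Fin z.1)}
    {θ₂ : Finset (Fin z.1 × Fin y.1)} (h₁ : IsAssignment θ₁) (h₂ : IsAssignment θ₂) :
    cost c p x y (composeAssignment θ₁ θ₂) ≤ cost c p x z θ₁ + cost c p z y θ₂ := by
  have hp0 : 0 < p := by linarith
  set F := composablePairs θ₁ θ₂
  set κ := c ^ p / 2
  have hκ : 0 ≤ κ := by positivity
  have hends : cost c p x y (composeAssignment θ₁ θ₂) =
      (∑ ab ∈ F, dist (x.2 ab.1.1) (y.2 ab.2.2) ^ p + κ * (x.1 + y.1 - 2 * #F)) ^ (1 / p) := by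
    rw [cost, ← image_composablePairs, sum_image (injOn_ends_composablePairs h₁),
      card_image_of_injOn (injOn_ends_composablePairs h₁)]
  have hxy := sub_nonneg.2 (h₁.composeAssignment h₂).two_mul_card_le_add
  rw [← image_composablePairs, card_image_of_injOn (injOn_ends_composablePairs h₁)] at hxy
  have hroot : ∀ t : ℝ, 0 ≤ t → ∃ r : ℝ, 0 ≤ r ∧ r ^ p = t := fun t ht =>
    ⟨t ^ (1 / p), by positivity, by rw [one_div, Real.rpow_inv_rpow ht hp0.ne']⟩
  obtain ⟨A, hA, hAp⟩ := hroot _ (mul_nonneg hκ (sub_nonneg.2 h₁.two_mul_card_le_add))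
  obtain ⟨B, hB, hBp⟩ := hroot _ (mul_nonneg hκ (sub_nonneg.2 h₂.two_mul_card_le_add))
  have hpenalty : κ * (x.1 + y.1 - 2 * #F) ≤ (A + B) ^ p := by
    have hcard : (#θ₁ + #θ₂ : ℝ) ≤ z.1 + #F := by
      exact_mod_cast card_add_card_le_card_composablePairs h₁ h₂
    calc κ * (x.1 + y.1 - 2 * #F) ≤ A ^ p + B ^ p := by
          rw [hAp, hBp, ← mul_add]; gcongr; linarith
      _ ≤ (A + B) ^ p := Real.add_rpow_le_rpow_add hA hB hp
  calc cost c p x y (composeAssignment θ₁ θ₂)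
      ≤ (∑ ab ∈ F, (dist (x.2 ab.1.1) (z.2 ab.1.2) + dist (z.2 ab.2.1) (y.2 ab.2.2)) ^ p
          + (A + B) ^ p) ^ (1 / p) := by
        rw [hends]
        refine Real.rpow_le_rpow (add_nonneg (sum_nonneg fun _ _ => by positivity)
          (mul_nonneg hκ hxy)) (add_le_add (sum_le_sum fun ab hab => ?_) hpenalty) (by positivity)
        rw [(mem_composablePairs.1 hab).2.2]
        exact Real.rpow_le_rpow dist_nonneg (dist_triangle _ _ _) hp0.le
    _ ≤ (∑ ab ∈ F, dist (x.2 ab.1.1) (z.2 ab.1.2) ^ p + A ^ p) ^ (1 / p)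
          + (∑ ab ∈ F, dist (z.2 ab.2.1) (y.2 ab.2.2) ^ p + B ^ p) ^ (1 / p) :=
        Real.Lp_add_le_of_nonneg_add_rpow F hp (fun _ _ => dist_nonneg) (fun _ _ => dist_nonneg)
          hA hB
    _ ≤ cost c p x z θ₁ + cost c p z y θ₂ := by
        rw [cost, cost]
        gcongr
        · exact sum_composablePairs_fst_le h₂ (fun ij => dist (x.2 ij.1) (z.2 ij.2) ^ p)
            fun _ => by positivity
        · exact hAp.le
        · exact sum_composablePairs_snd_le h₁ (fun ij => dist (z.2 ij.1) (y.2 ij.2) ^ p)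
            fun _ => by positivity
        · exact hBp.le

section dSOSPA

variable {E : Type*} [MetricSpace E] (c p : ℝ) (x y : Polyline E)

theorem dSOSPA_le_cost {θ : Finset (Fin x.1 × Fin y.1)} (hθ : IsOrderedAssignment θ) :
    dSOSPA c p x y ≤ cost c p x y θ :=
  ciInf_le (Set.finite_range _).bddBelow (⟨θ, hθ⟩ : {θ // IsOrderedAssignment θ})

theorem exists_cost_eq_dSOSPA :
    ∃ θ : Finset (Fin x.1 × Fin y.1), IsOrderedAssignment θ ∧ cost c p x y θ = dSOSPA c p x y := by
  have : Nonempty {θ : Finset (Fin x.1 × Fin y.1) // IsOrderedAssignment θ} :=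
    ⟨⟨∅, fun _ h => absurd h (notMem_empty _)⟩⟩
  obtain ⟨⟨θ, hθ⟩, h⟩ := exists_eq_ciInf_of_finite (f := fun θ : {θ // IsOrderedAssignment θ} =>
    cost c p x y θ.1)
  exact ⟨θ, hθ, h⟩

end dSOSPA

/-- For any finite sequences `x, y, z` of points in a metric space, any
`c > 0` and any `1 ≤ p < ∞`, the SOSPA distance satisfies the triangle inequality. -/
theorem dSOSPA_triangle {E : Type*} [MetricSpace E] (c p : ℝ) (hc : 0 < c) (hp : 1 ≤ p)
    (x y z : Polyline E) :
    dSOSPA c p x y ≤ dSOSPA c p x z + dSOSPA c p z y := by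
  obtain ⟨θ₁, h₁, hθ₁⟩ := exists_cost_eq_dSOSPA c p x z
  obtain ⟨θ₂, h₂, hθ₂⟩ := exists_cost_eq_dSOSPA c p z y
  calc dSOSPA c p x y ≤ cost c p x y (composeAssignment θ₁ θ₂) :=
        dSOSPA_le_cost c p x y (h₁.composeAssignment h₂)
    _ ≤ cost c p x z θ₁ + cost c p z y θ₂ :=
        cost_composeAssignment_le hc.le hp x z y h₁.isAssignment h₂.isAssignment
    _ = dSOSPA c p x z + dSOSPA c p z y := by rw [hθ₁, hθ₂]
end

section
/- For any finite sequences x, y of points in a metric space (E, d), any c > 0 and any 1 ≤ p < ∞, the SOSPA distance is nonnegative, symmetric (d_SOSPA^{(c,p)}(x, y) = d_SOSPA^{(c,p)}(y, x)), and satisfies the identity of indiscernibles: d_SOSPA^{(c,p)}(x, y) = 0 if and only if x and y are equal as sequences (same length and x_i = y_i for all i). -/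
open scoped BigOperators

section Aux

variable {E : Type*} [MetricSpace E] {c p : ℝ}

lemma ordered_injOn_fst {n m : ℕ} {θ : Finset (Fin n × Fin m)} (h : IsOrderedAssignment θ) :
    Set.InjOn Prod.fst (θ : Set (Fin n × Fin m)) := by
  intro a ha b hb hab
  rw [Finset.mem_coe] at ha hb
  have h1 := h a ha b hb
  have h2 := h b hb a ha
  have : a.2 = b.2 := le_antisymm
    (not_lt.1 fun hlt => absurd (h2.2 hlt) (by simp [hab]))
    (not_lt.1 fun hlt => absurd (h1.2 hlt) (by simp [hab]))
  exact Prod.ext hab this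

lemma ordered_injOn_snd {n m : ℕ} {θ : Finset (Fin n × Fin m)} (h : IsOrderedAssignment θ) :
    Set.InjOn Prod.snd (θ : Set (Fin n × Fin m)) := by
  intro a ha b hb hab
  rw [Finset.mem_coe] at ha hb
  have h1 := h a ha b hb
  have h2 := h b hb a ha
  have : a.1 = b.1 := le_antisymm
    (not_lt.1 fun hlt => absurd (h2.1 hlt) (by simp [hab]))
    (not_lt.1 fun hlt => absurd (h1.1 hlt) (by simp [hab]))
  exact Prod.ext this hab

lemma ordered_card_le_left {n m : ℕ} {θ : Finset (Fin n × Fin m)}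
    (h : IsOrderedAssignment θ) : θ.card ≤ n := by
  have := Finset.card_le_card_of_injOn Prod.fst (fun a _ => Finset.mem_univ a.1)
    (ordered_injOn_fst h)
  simpa using this

lemma ordered_card_le_right {n m : ℕ} {θ : Finset (Fin n × Fin m)}
    (h : IsOrderedAssignment θ) : θ.card ≤ m := by
  have := Finset.card_le_card_of_injOn Prod.snd (fun a _ => Finset.mem_univ a.2)
    (ordered_injOn_snd h)
  simpa using this

lemma inner_nonneg (hc : 0 < c) (x y : Polyline E)
    {θ : Finset (Fin x.1 × Fin y.1)} (hθ : IsOrderedAssignment θ) :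
    0 ≤ ∑ ij ∈ θ, dist (x.2 ij.1) (y.2 ij.2) ^ p
      + c ^ p / 2 * ((x.1 : ℝ) + (y.1 : ℝ) - 2 * (θ.card : ℝ)) := by
  have h1 : 0 ≤ ∑ ij ∈ θ, dist (x.2 ij.1) (y.2 ij.2) ^ p :=
    Finset.sum_nonneg fun ij _ => Real.rpow_nonneg dist_nonneg p
  have hcp : 0 ≤ c ^ p / 2 := by positivity
  have h2 : (0:ℝ) ≤ (x.1 : ℝ) + (y.1 : ℝ) - 2 * (θ.card : ℝ) := by
    have := ordered_card_le_left hθ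
    have := ordered_card_le_right hθ
    have hx : (θ.card : ℝ) ≤ x.1 := by exact_mod_cast ordered_card_le_left hθ
    have hy : (θ.card : ℝ) ≤ y.1 := by exact_mod_cast ordered_card_le_right hθ
    linarith
  nlinarith

lemma cost_nonneg (hc : 0 < c) (x y : Polyline E)
    {θ : Finset (Fin x.1 × Fin y.1)} (hθ : IsOrderedAssignment θ) :
    0 ≤ cost c p x y θ :=
  Real.rpow_nonneg (inner_nonneg hc x y hθ) _

lemma bdd_below_cost (hc : 0 < c) (x y : Polyline E) :
    BddBelow (Set.range fun θ : {θ : Finset (Fin x.1 × Fin y.1) // IsOrderedAssignment θ} =>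
      cost c p x y θ.1) := by
  refine ⟨0, ?_⟩
  rintro _ ⟨θ, rfl⟩
  exact cost_nonneg hc x y θ.2

lemma empty_ordered {n m : ℕ} : IsOrderedAssignment (∅ : Finset (Fin n × Fin m)) := by
  intro a ha
  simp at ha

instance polyNE (x y : Polyline E) :
    Nonempty {θ : Finset (Fin x.1 × Fin y.1) // IsOrderedAssignment θ} :=
  ⟨⟨∅, empty_ordered⟩⟩

lemma dSOSPA_nonneg (hc : 0 < c) (x y : Polyline E) : 0 ≤ dSOSPA c p x y :=
  le_ciInf fun θ => cost_nonneg hc x y θ.2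

lemma swap_ordered {n m : ℕ} {θ : Finset (Fin n × Fin m)} (h : IsOrderedAssignment θ) :
    IsOrderedAssignment (θ.map (Equiv.prodComm _ _).toEmbedding) := by
  intro a ha b hb
  simp only [Finset.mem_map, Equiv.coe_toEmbedding] at ha hb
  obtain ⟨a', ha', rfl⟩ := ha
  obtain ⟨b', hb', rfl⟩ := hb
  exact (h a' ha' b' hb').symm

lemma cost_swap (c p : ℝ) (x y : Polyline E) (θ : Finset (Fin x.1 × Fin y.1)) :
    cost c p y x (θ.map (Equiv.prodComm _ _).toEmbedding) = cost c p x y θ := by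
  unfold cost
  rw [Finset.sum_map, Finset.card_map]
  congr 1
  · congr 1
    · exact Finset.sum_congr rfl fun ij _ => by simp [dist_comm]
    · ring
  
lemma dSOSPA_le_symm (hc : 0 < c) (x y : Polyline E) :
    dSOSPA c p x y ≤ dSOSPA c p y x := by
  refine le_ciInf fun θ => ?_
  calc dSOSPA c p x y ≤ cost c p x y (θ.1.map (Equiv.prodComm _ _).toEmbedding) :=
        ciInf_le (bdd_below_cost hc x y) ⟨_, swap_ordered θ.2⟩
    _ = cost c p y x θ.1 := cost_swap c p y x θ.1

end Aux

/-- For any finite sequences `x, y` of points in a metric space, any `c > 0`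
and any `1 ≤ p < ∞`, the SOSPA distance is nonnegative, symmetric, and satisfies the
identity of indiscernibles: it vanishes iff `x` and `y` are equal as sequences (same
length and pointwise equal). -/
theorem dSOSPA_nonneg_symm_eq_zero_iff {E : Type*} [MetricSpace E] (c p : ℝ)
    (hc : 0 < c) (hp : 1 ≤ p) (x y : Polyline E) :
    0 ≤ dSOSPA c p x y ∧
    dSOSPA c p x y = dSOSPA c p y x ∧
    (dSOSPA c p x y = 0 ↔ ∃ h : x.1 = y.1, ∀ i : Fin x.1, x.2 i = y.2 (Fin.cast h i)) := by
  have hp0 : p ≠ 0 := by linarith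
  have hp1 : (1 : ℝ) / p ≠ 0 := one_div_ne_zero hp0
  refine ⟨dSOSPA_nonneg hc x y,
    le_antisymm (dSOSPA_le_symm hc x y) (dSOSPA_le_symm hc y x), ?_, ?_⟩
  · intro h0
    obtain ⟨θ, hθ⟩ := exists_eq_ciInf_of_finite
      (f := fun θ : {θ : Finset (Fin x.1 × Fin y.1) // IsOrderedAssignment θ} => cost c p x y θ.1)
    have hcost : cost c p x y θ.1 = 0 := by rw [hθ]; exact h0
    have hinner : ∑ ij ∈ θ.1, dist (x.2 ij.1) (y.2 ij.2) ^ p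
        + c ^ p / 2 * ((x.1 : ℝ) + (y.1 : ℝ) - 2 * (θ.1.card : ℝ)) = 0 :=
      (Real.rpow_eq_zero (inner_nonneg hc x y θ.2) hp1).1 hcost
    have hs : 0 ≤ ∑ ij ∈ θ.1, dist (x.2 ij.1) (y.2 ij.2) ^ p :=
      Finset.sum_nonneg fun ij _ => Real.rpow_nonneg dist_nonneg p
    have hcp : 0 < c ^ p / 2 := by positivity
    have hx : (θ.1.card : ℝ) ≤ x.1 := by exact_mod_cast ordered_card_le_left θ.2
    have hy : (θ.1.card : ℝ) ≤ y.1 := by exact_mod_cast ordered_card_le_right θ.2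
    have ht : 0 ≤ (x.1 : ℝ) + (y.1 : ℝ) - 2 * (θ.1.card : ℝ) := by linarith
    have hsum : ∑ ij ∈ θ.1, dist (x.2 ij.1) (y.2 ij.2) ^ p = 0 := by nlinarith
    have hcard : (x.1 : ℝ) + (y.1 : ℝ) - 2 * (θ.1.card : ℝ) = 0 := by nlinarith
    have hkx : (θ.1.card : ℝ) = x.1 := by linarith
    have hky : (θ.1.card : ℝ) = y.1 := by linarith
    have h : x.1 = y.1 := by exact_mod_cast hkx.symm.trans hky
    refine ⟨h, ?_⟩
    have hcardx : θ.1.card = x.1 := by exact_mod_cast hkx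
    -- surjectivity of the first projection
    have himg : θ.1.image Prod.fst = Finset.univ := by
      apply Finset.eq_univ_of_card
      rw [Finset.card_image_of_injOn (ordered_injOn_fst θ.2), hcardx, Fintype.card_fin]
    have hsurj : ∀ i : Fin x.1, ∃ j, (i, j) ∈ θ.1 := by
      intro i
      have hi : i ∈ θ.1.image Prod.fst := by rw [himg]; exact Finset.mem_univ i
      obtain ⟨ij, hij, hij'⟩ := Finset.mem_image.1 hi
      exact ⟨ij.2, by rwa [← hij', Prod.mk.eta]⟩
    set σ : Fin x.1 → Fin y.1 := fun i => (hsurj i).choose with hσdef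
    have hσmem : ∀ i, (i, σ i) ∈ θ.1 := fun i => (hsurj i).choose_spec
    have hσmono : StrictMono σ := fun a b hab =>
      (θ.2 _ (hσmem a) _ (hσmem b)).1 hab
    have hgmono : StrictMono (Fin.cast h) := fun a b hab => by
      simp only [Fin.lt_def, Fin.coe_cast]
      exact hab
    have hσsurj : Function.Surjective σ :=
      hσmono.injective.surjective_of_finite (finCongr h)
    have hrange : Set.range σ = Set.range (Fin.cast h) := by
      rw [Set.range_eq_univ.2 hσsurj,
        Set.range_eq_univ.2 (fun j => ⟨Fin.cast h.symm j, rfl⟩)]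
    haveI : WellFoundedLT (Fin x.1) := Finite.to_wellFoundedLT
    have hσeq : σ = Fin.cast h := (StrictMono.range_inj (f := σ) (g := Fin.cast h) hσmono hgmono).1 hrange
    intro i
    have hdist : dist (x.2 i) (y.2 (σ i)) ^ p = 0 :=
      (Finset.sum_eq_zero_iff_of_nonneg
        (fun ij _ => Real.rpow_nonneg dist_nonneg p)).1 hsum _ (hσmem i)
    have : dist (x.2 i) (y.2 (σ i)) = 0 :=
      (Real.rpow_eq_zero dist_nonneg hp0).1 hdist
    rw [← hσeq]
    exact dist_eq_zero.1 this
  · rintro ⟨h, hxy⟩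
    set θ₀ : Finset (Fin x.1 × Fin y.1) :=
      Finset.univ.map ⟨fun i => (i, Fin.cast h i), fun a b hab => by
        simpa using congrArg Prod.fst hab⟩ with hθ₀def
    have hmem : ∀ a ∈ θ₀, a.2 = Fin.cast h a.1 := by
      intro a ha
      simp only [hθ₀def, Finset.mem_map, Finset.mem_univ, Function.Embedding.coeFn_mk,
        true_and] at ha
      obtain ⟨i, hi⟩ := ha
      rw [← hi]
      rfl
    have hord : IsOrderedAssignment θ₀ := by
      intro a ha b hb
      rw [hmem a ha, hmem b hb]
      simp only [Fin.lt_def, Fin.coe_cast]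
    have hcard : θ₀.card = x.1 := by simp [hθ₀def]
    have hc0 : cost c p x y θ₀ = 0 := by
      unfold cost
      have hsum0 : ∑ ij ∈ θ₀, dist (x.2 ij.1) (y.2 ij.2) ^ p = 0 := by
        apply Finset.sum_eq_zero
        intro ij hij
        rw [hmem ij hij, ← hxy ij.1, dist_self]
        exact Real.zero_rpow hp0
      rw [hsum0, hcard]
      have : (y.1 : ℝ) = (x.1 : ℝ) := by exact_mod_cast h.symm
      rw [this]
      rw [show (0 : ℝ) + c ^ p / 2 * ((x.1 : ℝ) + (x.1 : ℝ) - 2 * (x.1 : ℝ)) = 0 by ring]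
      exact Real.zero_rpow hp1
    refine le_antisymm ?_ (dSOSPA_nonneg hc x y)
    calc dSOSPA c p x y ≤ cost c p x y θ₀ := ciInf_le (bdd_below_cost hc x y) ⟨θ₀, hord⟩
      _ = 0 := hc0
end

section
/- If θ_{x,z} ∈ Γ^o_{n,k} and θ_{z,y} ∈ Γ^o_{k,m} are ordered assignment sets and θ_c = θ_{x,z} ∘ θ_{z,y} is their composition, then |θ_{x,z}| + |θ_{z,y}| ≤ k + |θ_c|. -/
open scoped BigOperators

/-- If `θ_{x,z} ∈ Γ^o_{n,k}` and `θ_{z,y} ∈ Γ^o_{k,m}` and `θ_c` is their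
composition, then `|θ_{x,z}| + |θ_{z,y}| ≤ k + |θ_c|`. -/
theorem card_compose {n k m : ℕ}
    (θxz : Finset (Fin n × Fin k)) (θzy : Finset (Fin k × Fin m))
    (hxz : IsOrderedAssignment θxz) (hzy : IsOrderedAssignment θzy) :
    θxz.card + θzy.card ≤ k + (composeAssignment θxz θzy).card := by
  classical
  have key : ∀ {p q : ℕ} (θ : Finset (Fin p × Fin q)), IsOrderedAssignment θ →
      (∀ a ∈ θ, ∀ b ∈ θ, a.1 = b.1 → a = b) ∧ (∀ a ∈ θ, ∀ b ∈ θ, a.2 = b.2 → a = b) := by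
    intro p q θ hθ
    constructor
    · intro a ha b hb h
      refine Prod.ext h ?_
      rcases lt_trichotomy a.2 b.2 with h' | h' | h'
      · exact absurd ((hθ a ha b hb).mpr h') (by simp [h])
      · exact h'
      · exact absurd ((hθ b hb a ha).mpr h') (by simp [h])
    · intro a ha b hb h
      refine Prod.ext ?_ h
      rcases lt_trichotomy a.1 b.1 with h' | h' | h'
      · exact absurd ((hθ a ha b hb).mp h') (by simp [h])
      · exact h'
      · exact absurd ((hθ b hb a ha).mp h') (by simp [h])
  obtain ⟨hxz1, hxz2⟩ := key θxz hxz
  obtain ⟨hzy1, hzy2⟩ := key θzy hzy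
  set A := θxz.image Prod.snd with hAdef
  set B := θzy.image Prod.fst with hBdef
  have hA : A.card = θxz.card :=
    Finset.card_image_of_injOn (fun a ha b hb h => hxz2 a ha b hb h)
  have hB : B.card = θzy.card :=
    Finset.card_image_of_injOn (fun a ha b hb h => hzy1 a ha b hb h)
  have hk : (A ∪ B).card ≤ k := by
    calc (A ∪ B).card ≤ (Finset.univ : Finset (Fin k)).card := Finset.card_le_univ _
    _ = k := by simp
  have hint : (A ∩ B).card ≤ (composeAssignment θxz θzy).card := by
    rcases Nat.eq_zero_or_pos k with hk0 | hk0
    · subst hk0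
      have : (A ∩ B) = ∅ := Finset.eq_empty_of_isEmpty _
      simp [this]
    · haveI : Nonempty (Fin k) := ⟨⟨0, hk0⟩⟩
      apply Finset.card_le_card_of_surjOn
        (fun p : Fin n × Fin m =>
          if h : ∃ j, (p.1, j) ∈ θxz ∧ (j, p.2) ∈ θzy then h.choose else Classical.arbitrary _)
      intro j hj
      simp only [Finset.coe_inter, Set.mem_inter_iff, Finset.mem_coe, hAdef, hBdef,
        Finset.mem_image] at hj
      obtain ⟨⟨a, ha, haj⟩, ⟨b, hb, hbj⟩⟩ := hj
      have ha' : (a.1, j) ∈ θxz := by rw [← haj]; simpa using ha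
      have hb' : (j, b.2) ∈ θzy := by rw [← hbj]; simpa using hb
      have hmem : (a.1, b.2) ∈ composeAssignment θxz θzy := by
        simp only [composeAssignment, Finset.mem_filter, Finset.mem_univ, true_and]
        exact ⟨j, ha', hb'⟩
      refine ⟨(a.1, b.2), hmem, ?_⟩
      have hex : ∃ j', ((a.1, b.2).1, j') ∈ θxz ∧ (j', (a.1, b.2).2) ∈ θzy := ⟨j, ha', hb'⟩
      simp only [hex, dite_true]
      obtain ⟨h1, h2⟩ := hex.choose_spec
      have := hxz1 (a.1, hex.choose) h1 (a.1, j) ha' rfl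
      exact congrArg Prod.snd this
  calc θxz.card + θzy.card = A.card + B.card := by rw [hA, hB]
  _ = (A ∪ B).card + (A ∩ B).card := (Finset.card_union_add_card_inter A B).symm
  _ ≤ k + (composeAssignment θxz θzy).card := Nat.add_le_add hk hint
end

section
/- For any finite sequences x, y, z of points in a metric space (E, d), any c > 0, any 1 ≤ p < ∞, any ordered assignment sets θ_{x,z} ∈ Γ^o_{|x|,|z|} and θ_{z,y} ∈ Γ^o_{|z|,|y|}, and their composition θ_c = θ_{x,z} ∘ θ_{z,y}, the assignment costs satisfy C(θ_c, x, y) ≤ C(θ_{x,z}, x, z) + C(θ_{z,y}, z, y). -/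
open scoped BigOperators

private lemma orderedAssignment_eq_of_fst {n m : ℕ} {θ : Finset (Fin n × Fin m)}
    (h : IsOrderedAssignment θ) {a b : Fin n × Fin m} (ha : a ∈ θ) (hb : b ∈ θ)
    (hab : a.1 = b.1) : a = b := by
  have h1 := h a ha b hb
  have h2 := h b hb a ha
  have na : ¬ a.1 < b.1 := by simp [hab]
  have nb : ¬ b.1 < a.1 := by simp [hab]
  have h3 : a.2 = b.2 :=
    le_antisymm (not_lt.mp fun hlt => nb (h2.mpr hlt)) (not_lt.mp fun hlt => na (h1.mpr hlt))
  exact Prod.ext hab h3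

private lemma orderedAssignment_eq_of_snd {n m : ℕ} {θ : Finset (Fin n × Fin m)}
    (h : IsOrderedAssignment θ) {a b : Fin n × Fin m} (ha : a ∈ θ) (hb : b ∈ θ)
    (hab : a.2 = b.2) : a = b := by
  have h1 := h a ha b hb
  have h2 := h b hb a ha
  have na : ¬ a.2 < b.2 := by simp [hab]
  have nb : ¬ b.2 < a.2 := by simp [hab]
  have h3 : a.1 = b.1 :=
    le_antisymm (not_lt.mp fun hlt => nb (h2.mp hlt)) (not_lt.mp fun hlt => na (h1.mp hlt))
  exact Prod.ext h3 hab

private lemma card_le_fst {n m : ℕ} {θ : Finset (Fin n × Fin m)}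
    (h : ∀ a ∈ θ, ∀ b ∈ θ, a.1 = b.1 → a = b) : θ.card ≤ n := by
  have him : (θ.image Prod.fst).card = θ.card :=
    Finset.card_image_of_injOn fun a ha b hb hab => h a ha b hb hab
  rw [← him]
  simpa using Finset.card_le_univ (θ.image Prod.fst)

private lemma card_le_snd {n m : ℕ} {θ : Finset (Fin n × Fin m)}
    (h : ∀ a ∈ θ, ∀ b ∈ θ, a.2 = b.2 → a = b) : θ.card ≤ m := by
  have him : (θ.image Prod.snd).card = θ.card :=
    Finset.card_image_of_injOn fun a ha b hb hab => h a ha b hb hab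
  rw [← him]
  simpa using Finset.card_le_univ (θ.image Prod.snd)

private lemma add_rpow_le_rpow_add' {a b p : ℝ} (ha : 0 ≤ a) (hb : 0 ≤ b) (hp : 1 ≤ p) :
    a ^ p + b ^ p ≤ (a + b) ^ p := by
  lift a to NNReal using ha
  lift b to NNReal using hb
  have h := NNReal.add_rpow_le_rpow_add a b hp
  have h' : ((a ^ p + b ^ p : NNReal) : ℝ) ≤ (((a + b) ^ p : NNReal) : ℝ) := by
    exact_mod_cast h
  simpa [NNReal.coe_rpow] using h'

/-- The assignment cost of the composed assignment set is at most the sum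
of the assignment costs of the two composed assignment sets. -/
theorem cost_compose_le {E : Type*} [MetricSpace E] (c p : ℝ) (hc : 0 < c) (hp : 1 ≤ p)
    (x y z : Polyline E)
    (θxz : Finset (Fin x.1 × Fin z.1)) (θzy : Finset (Fin z.1 × Fin y.1))
    (hxz : IsOrderedAssignment θxz) (hzy : IsOrderedAssignment θzy) :
    cost c p x y (composeAssignment θxz θzy) ≤ cost c p x z θxz + cost c p z y θzy := by
  classical
  have hp0 : (0:ℝ) < p := lt_of_lt_of_le one_pos hp
  have hpne : p ≠ 0 := ne_of_gt hp0
  have hip : (0:ℝ) ≤ 1 / p := by positivity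
  have hcp2 : (0:ℝ) ≤ c ^ p / 2 := by
    have := Real.rpow_pos_of_pos hc p
    linarith
  set θc : Finset (Fin x.1 × Fin y.1) := composeAssignment θxz θzy with hθcdef
  have hmemc : ∀ im : Fin x.1 × Fin y.1,
      im ∈ θc ↔ ∃ j, (im.1, j) ∈ θxz ∧ (j, im.2) ∈ θzy := by
    intro im
    rw [hθcdef]
    simp [composeAssignment]
  -- matching properties
  have hxz1 : ∀ a ∈ θxz, ∀ b ∈ θxz, a.1 = b.1 → a = b :=
    fun a ha b hb hab => orderedAssignment_eq_of_fst hxz ha hb hab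
  have hxz2 : ∀ a ∈ θxz, ∀ b ∈ θxz, a.2 = b.2 → a = b :=
    fun a ha b hb hab => orderedAssignment_eq_of_snd hxz ha hb hab
  have hzy1 : ∀ a ∈ θzy, ∀ b ∈ θzy, a.1 = b.1 → a = b :=
    fun a ha b hb hab => orderedAssignment_eq_of_fst hzy ha hb hab
  have hzy2 : ∀ a ∈ θzy, ∀ b ∈ θzy, a.2 = b.2 → a = b :=
    fun a ha b hb hab => orderedAssignment_eq_of_snd hzy ha hb hab
  have hc1 : ∀ a ∈ θc, ∀ b ∈ θc, a.1 = b.1 → a = b := by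
    intro a ha b hb hab
    obtain ⟨ja, hja1, hja2⟩ := (hmemc a).mp ha
    obtain ⟨jb, hjb1, hjb2⟩ := (hmemc b).mp hb
    have hj : ja = jb := by
      have h := hxz1 _ hja1 _ hjb1 hab
      exact (Prod.mk.inj h).2
    subst hj
    have h2 : a.2 = b.2 := by
      have h := hzy1 _ hja2 _ hjb2 rfl
      exact (Prod.mk.inj h).2
    exact Prod.ext hab h2
  have hc2 : ∀ a ∈ θc, ∀ b ∈ θc, a.2 = b.2 → a = b := by
    intro a ha b hb hab
    obtain ⟨ja, hja1, hja2⟩ := (hmemc a).mp ha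
    obtain ⟨jb, hjb1, hjb2⟩ := (hmemc b).mp hb
    have hj : ja = jb := by
      have h := hzy2 _ hja2 _ hjb2 hab
      exact (Prod.mk.inj h).1
    subst hj
    have h1 : a.1 = b.1 := by
      have h := hxz2 _ hja1 _ hjb1 rfl
      exact (Prod.mk.inj h).1
    exact Prod.ext h1 hab
  -- cardinality bounds
  have na1 : θxz.card ≤ x.1 := card_le_fst hxz1
  have na2 : θxz.card ≤ z.1 := card_le_snd hxz2
  have nb1 : θzy.card ≤ z.1 := card_le_fst hzy1
  have nb2 : θzy.card ≤ y.1 := card_le_snd hzy2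
  have nt1 : θc.card ≤ x.1 := card_le_fst hc1
  have nt2 : θc.card ≤ y.1 := card_le_snd hc2
  -- the counting lemma : a + b ≤ k + t
  have hcount : θxz.card + θzy.card ≤ z.1 + θc.card := by
    have hAcard : (θxz.image Prod.snd).card = θxz.card :=
      Finset.card_image_of_injOn fun a ha b hb hab => hxz2 a ha b hb hab
    have hBcard : (θzy.image Prod.fst).card = θzy.card :=
      Finset.card_image_of_injOn fun a ha b hb hab => hzy1 a ha b hb hab
    have hU : (θxz.image Prod.snd ∪ θzy.image Prod.fst).card ≤ z.1 := by
      simpa using Finset.card_le_univ (θxz.image Prod.snd ∪ θzy.image Prod.fst)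
    have hI : (θxz.image Prod.snd ∩ θzy.image Prod.fst).card ≤ θc.card := by
      rcases Finset.eq_empty_or_nonempty (θxz.image Prod.snd ∩ θzy.image Prod.fst) with
        he | ⟨j0, hj0⟩
      · simp [he]
      · apply Finset.card_le_card_of_surjOn
          (fun im : Fin x.1 × Fin y.1 =>
            if h : ∃ j, (im.1, j) ∈ θxz ∧ (j, im.2) ∈ θzy then h.choose else j0)
        intro j hj
        rw [Finset.coe_inter, Set.mem_inter_iff] at hj
        obtain ⟨hjA, hjB⟩ := hj
        simp only [Finset.mem_coe, Finset.mem_image] at hjA hjB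
        obtain ⟨a, ha, ha2⟩ := hjA
        obtain ⟨b, hb, hb1⟩ := hjB
        have haj : (a.1, j) ∈ θxz := by rw [← ha2]; simpa using ha
        have hjb : (j, b.2) ∈ θzy := by rw [← hb1]; simpa using hb
        have hP : ∃ j', ((a.1, b.2).1, j') ∈ θxz ∧ (j', (a.1, b.2).2) ∈ θzy := ⟨j, haj, hjb⟩
        refine ⟨(a.1, b.2), Finset.mem_coe.mpr ((hmemc _).mpr hP), ?_⟩
        simp only [dif_pos hP]
        have hch := hP.choose_spec
        have h := hxz1 _ hch.1 _ haj rfl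
        exact (Prod.mk.inj h).2
    have := Finset.card_union_add_card_inter (θxz.image Prod.snd) (θzy.image Prod.fst)
    omega
  -- the matched-distance functions through z
  set f : Fin x.1 × Fin y.1 → ℝ := fun im =>
    if h : ∃ j, (im.1, j) ∈ θxz ∧ (j, im.2) ∈ θzy then dist (x.2 im.1) (z.2 h.choose) else 0
    with hfdef
  set g : Fin x.1 × Fin y.1 → ℝ := fun im =>
    if h : ∃ j, (im.1, j) ∈ θxz ∧ (j, im.2) ∈ θzy then dist (z.2 h.choose) (y.2 im.2) else 0
    with hgdef
  have hf0 : ∀ im, 0 ≤ f im := by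
    intro im
    simp only [hfdef]
    split
    · exact dist_nonneg
    · exact le_rfl
  have hg0 : ∀ im, 0 ≤ g im := by
    intro im
    simp only [hgdef]
    split
    · exact dist_nonneg
    · exact le_rfl
  -- key sum bounds
  have key1 : ∑ im ∈ θc, f im ^ p ≤ ∑ ij ∈ θxz, dist (x.2 ij.1) (z.2 ij.2) ^ p := by
    rcases Finset.eq_empty_or_nonempty θc with he | ⟨im0, him0⟩
    · rw [he, Finset.sum_empty]
      exact Finset.sum_nonneg fun ij _ => Real.rpow_nonneg dist_nonneg p
    · obtain ⟨j0, -, -⟩ := (hmemc im0).mp him0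
      set φ : Fin x.1 × Fin y.1 → Fin x.1 × Fin z.1 := fun im =>
        (im.1, if h : ∃ j, (im.1, j) ∈ θxz ∧ (j, im.2) ∈ θzy then h.choose else j0) with hφdef
      have hfφ : ∀ im ∈ θc, f im = dist (x.2 (φ im).1) (z.2 (φ im).2) := by
        intro im him
        have h := (hmemc im).mp him
        simp only [hfdef, hφdef, dif_pos h]
      have hφmem : ∀ im ∈ θc, φ im ∈ θxz := by
        intro im him
        have h := (hmemc im).mp him
        simp only [hφdef, dif_pos h]
        exact h.choose_spec.1
      have hφinj : Set.InjOn φ ↑θc := by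
        intro a ha b hb hab
        rw [Finset.mem_coe] at ha hb
        have hA := (hmemc a).mp ha
        have hB := (hmemc b).mp hb
        simp only [hφdef, dif_pos hA, dif_pos hB, Prod.mk.injEq] at hab
        obtain ⟨h1, h2⟩ := hab
        have ha2 := hA.choose_spec.2
        have hb2 := hB.choose_spec.2
        rw [h2] at ha2
        have h := hzy1 _ ha2 _ hb2 rfl
        exact Prod.ext h1 (Prod.mk.inj h).2
      calc ∑ im ∈ θc, f im ^ p
          = ∑ im ∈ θc, dist (x.2 (φ im).1) (z.2 (φ im).2) ^ p :=
            Finset.sum_congr rfl fun im him => by rw [hfφ im him]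
        _ = ∑ ij ∈ θc.image φ, dist (x.2 ij.1) (z.2 ij.2) ^ p :=
            (Finset.sum_image (f := fun ij : Fin x.1 × Fin z.1 => dist (x.2 ij.1) (z.2 ij.2) ^ p)
              fun a ha b hb hab => hφinj ha hb hab).symm
        _ ≤ ∑ ij ∈ θxz, dist (x.2 ij.1) (z.2 ij.2) ^ p := by
            apply Finset.sum_le_sum_of_subset_of_nonneg
            · intro ij hij
              obtain ⟨im, him, rfl⟩ := Finset.mem_image.mp hij
              exact hφmem im him
            · intro i _ _
              exact Real.rpow_nonneg dist_nonneg p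
  have key2 : ∑ im ∈ θc, g im ^ p ≤ ∑ jm ∈ θzy, dist (z.2 jm.1) (y.2 jm.2) ^ p := by
    rcases Finset.eq_empty_or_nonempty θc with he | ⟨im0, him0⟩
    · rw [he, Finset.sum_empty]
      exact Finset.sum_nonneg fun ij _ => Real.rpow_nonneg dist_nonneg p
    · obtain ⟨j0, -, -⟩ := (hmemc im0).mp him0
      set ψ : Fin x.1 × Fin y.1 → Fin z.1 × Fin y.1 := fun im =>
        ((if h : ∃ j, (im.1, j) ∈ θxz ∧ (j, im.2) ∈ θzy then h.choose else j0), im.2) with hψdef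
      have hgψ : ∀ im ∈ θc, g im = dist (z.2 (ψ im).1) (y.2 (ψ im).2) := by
        intro im him
        have h := (hmemc im).mp him
        simp only [hgdef, hψdef, dif_pos h]
      have hψmem : ∀ im ∈ θc, ψ im ∈ θzy := by
        intro im him
        have h := (hmemc im).mp him
        simp only [hψdef, dif_pos h]
        exact h.choose_spec.2
      have hψinj : Set.InjOn ψ ↑θc := by
        intro a ha b hb hab
        rw [Finset.mem_coe] at ha hb
        have hA := (hmemc a).mp ha
        have hB := (hmemc b).mp hb
        simp only [hψdef, dif_pos hA, dif_pos hB, Prod.mk.injEq] at hab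
        obtain ⟨h2, h1⟩ := hab
        have ha1 := hA.choose_spec.1
        have hb1 := hB.choose_spec.1
        rw [h2] at ha1
        have h := hxz2 _ ha1 _ hb1 rfl
        exact Prod.ext (Prod.mk.inj h).1 h1
      calc ∑ im ∈ θc, g im ^ p
          = ∑ im ∈ θc, dist (z.2 (ψ im).1) (y.2 (ψ im).2) ^ p :=
            Finset.sum_congr rfl fun im him => by rw [hgψ im him]
        _ = ∑ jm ∈ θc.image ψ, dist (z.2 jm.1) (y.2 jm.2) ^ p :=
            (Finset.sum_image (f := fun jm : Fin z.1 × Fin y.1 => dist (z.2 jm.1) (y.2 jm.2) ^ p)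
              fun a ha b hb hab => hψinj ha hb hab).symm
        _ ≤ ∑ jm ∈ θzy, dist (z.2 jm.1) (y.2 jm.2) ^ p := by
            apply Finset.sum_le_sum_of_subset_of_nonneg
            · intro jm hjm
              obtain ⟨im, him, rfl⟩ := Finset.mem_image.mp hjm
              exact hψmem im him
            · intro i _ _
              exact Real.rpow_nonneg dist_nonneg p
  -- penalty terms
  set Axz : ℝ := c ^ p / 2 * ((x.1 : ℝ) + (z.1 : ℝ) - 2 * (θxz.card : ℝ)) with hAxzdef
  set Azy : ℝ := c ^ p / 2 * ((z.1 : ℝ) + (y.1 : ℝ) - 2 * (θzy.card : ℝ)) with hAzydef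
  set Ac : ℝ := c ^ p / 2 * ((x.1 : ℝ) + (y.1 : ℝ) - 2 * (θc.card : ℝ)) with hAcdef
  have ra1 : (θxz.card : ℝ) ≤ x.1 := by exact_mod_cast na1
  have ra2 : (θxz.card : ℝ) ≤ z.1 := by exact_mod_cast na2
  have rb1 : (θzy.card : ℝ) ≤ z.1 := by exact_mod_cast nb1
  have rb2 : (θzy.card : ℝ) ≤ y.1 := by exact_mod_cast nb2
  have rt1 : (θc.card : ℝ) ≤ x.1 := by exact_mod_cast nt1
  have rt2 : (θc.card : ℝ) ≤ y.1 := by exact_mod_cast nt2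
  have rcount : (θxz.card : ℝ) + (θzy.card : ℝ) ≤ (z.1 : ℝ) + (θc.card : ℝ) := by
    exact_mod_cast hcount
  have hAxz0 : 0 ≤ Axz := by
    rw [hAxzdef]; exact mul_nonneg hcp2 (by linarith)
  have hAzy0 : 0 ≤ Azy := by
    rw [hAzydef]; exact mul_nonneg hcp2 (by linarith)
  have hAc0 : 0 ≤ Ac := by
    rw [hAcdef]; exact mul_nonneg hcp2 (by linarith)
  have hAcle : Ac ≤ Axz + Azy := by
    rw [hAcdef, hAxzdef, hAzydef]
    have hd : (x.1 : ℝ) + (y.1 : ℝ) - 2 * (θc.card : ℝ) ≤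
        ((x.1 : ℝ) + (z.1 : ℝ) - 2 * (θxz.card : ℝ))
          + ((z.1 : ℝ) + (y.1 : ℝ) - 2 * (θzy.card : ℝ)) := by linarith
    calc c ^ p / 2 * ((x.1 : ℝ) + (y.1 : ℝ) - 2 * (θc.card : ℝ))
        ≤ c ^ p / 2 * (((x.1 : ℝ) + (z.1 : ℝ) - 2 * (θxz.card : ℝ))
          + ((z.1 : ℝ) + (y.1 : ℝ) - 2 * (θzy.card : ℝ))) :=
          mul_le_mul_of_nonneg_left hd hcp2
      _ = c ^ p / 2 * ((x.1 : ℝ) + (z.1 : ℝ) - 2 * (θxz.card : ℝ))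
          + c ^ p / 2 * ((z.1 : ℝ) + (y.1 : ℝ) - 2 * (θzy.card : ℝ)) := by ring
  have hpow : ∀ t : ℝ, 0 ≤ t → (t ^ (1 / p)) ^ p = t := by
    intro t ht
    rw [one_div]
    exact Real.rpow_inv_rpow ht hpne
  -- Minkowski setup with one extra coordinate for the penalties
  set emb : (Fin x.1 × Fin y.1) ↪ Option (Fin x.1 × Fin y.1) :=
    ⟨some, Option.some_injective _⟩ with hembdef
  have hnone : (none : Option (Fin x.1 × Fin y.1)) ∉ θc.map emb := by
    simp [hembdef]
  set S : Finset (Option (Fin x.1 × Fin y.1)) := insert none (θc.map emb) with hSdef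
  set F : Option (Fin x.1 × Fin y.1) → ℝ := fun o => o.elim (Axz ^ (1 / p)) f with hFdef
  set G : Option (Fin x.1 × Fin y.1) → ℝ := fun o => o.elim (Azy ^ (1 / p)) g with hGdef
  have hSF : ∑ o ∈ S, F o ^ p = Axz + ∑ im ∈ θc, f im ^ p := by
    rw [hSdef, Finset.sum_insert hnone, Finset.sum_map]
    simp only [hFdef, hembdef, Function.Embedding.coeFn_mk, Option.elim_none, Option.elim_some]
    rw [hpow _ hAxz0]
  have hSG : ∑ o ∈ S, G o ^ p = Azy + ∑ im ∈ θc, g im ^ p := by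
    rw [hSdef, Finset.sum_insert hnone, Finset.sum_map]
    simp only [hGdef, hembdef, Function.Embedding.coeFn_mk, Option.elim_none, Option.elim_some]
    rw [hpow _ hAzy0]
  have hSFG : ∑ o ∈ S, (F o + G o) ^ p
      = (Axz ^ (1 / p) + Azy ^ (1 / p)) ^ p + ∑ im ∈ θc, (f im + g im) ^ p := by
    rw [hSdef, Finset.sum_insert hnone, Finset.sum_map]
    simp only [hFdef, hGdef, hembdef, Function.Embedding.coeFn_mk, Option.elim_none,
      Option.elim_some]
  have hF0 : ∀ o ∈ S, 0 ≤ F o := by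
    intro o _
    rcases o with _ | im
    · exact Real.rpow_nonneg hAxz0 _
    · exact hf0 im
  have hG0 : ∀ o ∈ S, 0 ≤ G o := by
    intro o _
    rcases o with _ | im
    · exact Real.rpow_nonneg hAzy0 _
    · exact hg0 im
  -- the three main steps
  have cc : cost c p x y θc
      = (∑ im ∈ θc, dist (x.2 im.1) (y.2 im.2) ^ p + Ac) ^ (1 / p) := rfl
  have cxz : cost c p x z θxz
      = (∑ ij ∈ θxz, dist (x.2 ij.1) (z.2 ij.2) ^ p + Axz) ^ (1 / p) := rfl
  have czy : cost c p z y θzy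
      = (∑ jm ∈ θzy, dist (z.2 jm.1) (y.2 jm.2) ^ p + Azy) ^ (1 / p) := rfl
  have step1 : cost c p x y θc ≤ (∑ o ∈ S, (F o + G o) ^ p) ^ (1 / p) := by
    rw [cc]
    apply Real.rpow_le_rpow
    · exact add_nonneg (Finset.sum_nonneg fun im _ => Real.rpow_nonneg dist_nonneg p) hAc0
    · rw [hSFG]
      have h1 : ∑ im ∈ θc, dist (x.2 im.1) (y.2 im.2) ^ p
          ≤ ∑ im ∈ θc, (f im + g im) ^ p := by
        apply Finset.sum_le_sum
        intro im him
        have h := (hmemc im).mp him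
        apply Real.rpow_le_rpow dist_nonneg _ hp0.le
        have hfv : f im = dist (x.2 im.1) (z.2 h.choose) := by
          simp only [hfdef, dif_pos h]
        have hgv : g im = dist (z.2 h.choose) (y.2 im.2) := by
          simp only [hgdef, dif_pos h]
        rw [hfv, hgv]
        exact dist_triangle _ _ _
      have h2 : Ac ≤ (Axz ^ (1 / p) + Azy ^ (1 / p)) ^ p := by
        calc Ac ≤ Axz + Azy := hAcle
          _ = (Axz ^ (1 / p)) ^ p + (Azy ^ (1 / p)) ^ p := by
              rw [hpow _ hAxz0, hpow _ hAzy0]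
          _ ≤ (Axz ^ (1 / p) + Azy ^ (1 / p)) ^ p :=
              add_rpow_le_rpow_add' (Real.rpow_nonneg hAxz0 _) (Real.rpow_nonneg hAzy0 _) hp
      linarith
    · exact hip
  have step2 : (∑ o ∈ S, (F o + G o) ^ p) ^ (1 / p)
      ≤ (∑ o ∈ S, F o ^ p) ^ (1 / p) + (∑ o ∈ S, G o ^ p) ^ (1 / p) :=
    Real.Lp_add_le_of_nonneg S hp hF0 hG0
  have step3 : (∑ o ∈ S, F o ^ p) ^ (1 / p) ≤ cost c p x z θxz := by
    rw [cxz]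
    apply Real.rpow_le_rpow
    · rw [hSF]
      exact add_nonneg hAxz0 (Finset.sum_nonneg fun im _ => Real.rpow_nonneg (hf0 im) p)
    · rw [hSF]
      linarith [key1]
    · exact hip
  have step4 : (∑ o ∈ S, G o ^ p) ^ (1 / p) ≤ cost c p z y θzy := by
    rw [czy]
    apply Real.rpow_le_rpow
    · rw [hSG]
      exact add_nonneg hAzy0 (Finset.sum_nonneg fun im _ => Real.rpow_nonneg (hg0 im) p)
    · rw [hSG]
      linarith [key2]
    · exact hip
  calc cost c p x y θc ≤ (∑ o ∈ S, (F o + G o) ^ p) ^ (1 / p) := step1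
    _ ≤ (∑ o ∈ S, F o ^ p) ^ (1 / p) + (∑ o ∈ S, G o ^ p) ^ (1 / p) := step2
    _ ≤ cost c p x z θxz + cost c p z y θzy := add_le_add step3 step4
end

section
/- Let x and y be nonempty finite sequences of points in a metric space (E, d), let c > 0 and 1 ≤ p < ∞, and let θ ∈ Γ^o_{|x|,|y|} be an ordered assignment set for the pair (x, S_{s_y}(y)) for some s_y ∈ {0, …, |y|−1}. Then there exist an ordered assignment set θ̄ ∈ Γ^o_{|x|,|y|} and an integer l ∈ {0, …, |y|−1} such that C(θ, x, S_{s_y}(y)) = C(θ̄, S_1(x), S_l(y)). -/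
open scoped BigOperators

lemma mod_sub_helper {m j t : ℕ} (hj : j < m) (ht : t ≤ j) :
    (j + (m - t)) % m = j - t := by
  rw [show j + (m - t) = m + (j - t) by omega, Nat.add_mod_left,
    Nat.mod_eq_of_lt (by omega)]

lemma transfer_aux {E : Type*} [MetricSpace E] (c p : ℝ) {n m : ℕ}
    (hn : 0 < n) (hm : 0 < m) (xf : Fin n → E) (yf : Fin m → E)
    (sy : ℕ) (θ : Finset (Fin n × Fin m)) (t : ℕ) (ht : t ≤ m)
    (hord : ∀ a ∈ θ, ∀ b ∈ θ,
      (((a.1 : ℕ) + (n - 1)) % n < ((b.1 : ℕ) + (n - 1)) % n ↔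
        ((a.2 : ℕ) + (m - t)) % m < ((b.2 : ℕ) + (m - t)) % m)) :
    ∃ (θ' : Finset (Fin n × Fin m)) (l : ℕ), IsOrderedAssignment θ' ∧ l < m ∧
      cost c p ⟨n, xf⟩ (shift sy ⟨m, yf⟩) θ
        = cost c p (shift 1 ⟨n, xf⟩) (shift l ⟨m, yf⟩) θ' := by
  classical
  set l := (sy + t) % m with hl_def
  have hl : l < m := Nat.mod_lt _ hm
  set ψ : Fin n × Fin m → Fin n × Fin m := fun a =>
    (⟨((a.1 : ℕ) + (n - 1)) % n, Nat.mod_lt _ hn⟩,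
     ⟨((a.2 : ℕ) + (m - t)) % m, Nat.mod_lt _ hm⟩) with hψ
  have key1 : ∀ i : Fin n, (((i : ℕ) + (n - 1)) % n + 1) % n = (i : ℕ) := by
    intro i
    rw [Nat.mod_add_mod, show (i : ℕ) + (n - 1) + 1 = (i : ℕ) + n by omega,
      Nat.add_mod_right, Nat.mod_eq_of_lt i.isLt]
  have key2 : ∀ j : Fin m, (((j : ℕ) + (m - t)) % m + t) % m = (j : ℕ) := by
    intro j
    rw [Nat.mod_add_mod, show (j : ℕ) + (m - t) + t = (j : ℕ) + m by omega,
      Nat.add_mod_right, Nat.mod_eq_of_lt j.isLt]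
  have hinj : Function.Injective ψ := by
    intro a b hab
    have h1 : (((a.1 : ℕ) + (n - 1)) % n + 1) % n = (((b.1 : ℕ) + (n - 1)) % n + 1) % n := by
      rw [hψ] at hab
      exact congrArg (fun z : Fin n × Fin m => ((z.1 : ℕ) + 1) % n) hab
    have h2 : (((a.2 : ℕ) + (m - t)) % m + t) % m = (((b.2 : ℕ) + (m - t)) % m + t) % m := by
      rw [hψ] at hab
      exact congrArg (fun z : Fin n × Fin m => ((z.2 : ℕ) + t) % m) hab
    rw [key1 a.1, key1 b.1] at h1
    rw [key2 a.2, key2 b.2] at h2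
    exact Prod.ext (Fin.val_injective h1) (Fin.val_injective h2)
  refine ⟨θ.image ψ, l, ?_, hl, ?_⟩
  · intro a' ha' b' hb'
    obtain ⟨a, ha, rfl⟩ := Finset.mem_image.mp ha'
    obtain ⟨b, hb, rfl⟩ := Finset.mem_image.mp hb'
    simpa [hψ, Fin.lt_def] using hord a ha b hb
  · have hcard : (θ.image ψ).card = θ.card := Finset.card_image_of_injective θ hinj
    have hsum : ∑ ij ∈ θ.image ψ,
          dist ((shift 1 (⟨n, xf⟩ : Polyline E)).2 ij.1)
            ((shift l (⟨m, yf⟩ : Polyline E)).2 ij.2) ^ p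
        = ∑ ij ∈ θ, dist (xf ij.1) ((shift sy (⟨m, yf⟩ : Polyline E)).2 ij.2) ^ p := by
      rw [Finset.sum_image (fun a _ b _ h => hinj h)]
      refine Finset.sum_congr rfl fun ij _ => ?_
      congr 1
      have ex : (shift 1 (⟨n, xf⟩ : Polyline E)).2 (ψ ij).1 = xf ij.1 := by
        show xf _ = xf _
        exact congrArg xf (Fin.val_injective (key1 ij.1))
      have ey : (shift l (⟨m, yf⟩ : Polyline E)).2 (ψ ij).2
          = (shift sy (⟨m, yf⟩ : Polyline E)).2 ij.2 := by
        show yf _ = yf _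
        refine congrArg yf (Fin.val_injective ?_)
        show (((ij.2 : ℕ) + (m - t)) % m + (sy + t) % m) % m = ((ij.2 : ℕ) + sy) % m
        rw [Nat.mod_add_mod, Nat.add_mod_mod,
          show (ij.2 : ℕ) + (m - t) + (sy + t) = ((ij.2 : ℕ) + sy) + m by omega,
          Nat.add_mod_right]
      rw [ex, ey]
    unfold cost
    simp only [shift] at *
    rw [hcard, hsum]

/-- Every ordered assignment set for `(x, S_{s_y}(y))` can be transferred
to an ordered assignment set of equal assignment cost for `(S_1(x), S_l(y))` for some
shift `l ∈ {0,…,|y|−1}`. -/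
theorem exists_shift_transfer {E : Type*} [MetricSpace E] (c p : ℝ) (hc : 0 < c)
    (hp : 1 ≤ p) (x y : Polyline E) (hx : x.1 ≠ 0) (hy : y.1 ≠ 0)
    (sy : ℕ) (hsy : sy < y.1)
    (θ : Finset (Fin x.1 × Fin y.1)) (hθ : IsOrderedAssignment θ) :
    ∃ (θ' : Finset (Fin x.1 × Fin y.1)) (l : ℕ), IsOrderedAssignment θ' ∧ l < y.1 ∧
      cost c p x (shift sy y) θ = cost c p (shift 1 x) (shift l y) θ' := by
  obtain ⟨n, xf⟩ := x
  obtain ⟨m, yf⟩ := y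
  have hn : 0 < n := Nat.pos_of_ne_zero hx
  have hm : 0 < m := Nat.pos_of_ne_zero hy
  by_cases h0 : ∃ a ∈ θ, (a.1 : ℕ) = 0
  · obtain ⟨a0, ha0, ha01⟩ := h0
    have hgt : ∀ b ∈ θ, b ≠ a0 → 0 < (b.1 : ℕ) ∧ (a0.2 : ℕ) < (b.2 : ℕ) := by
      intro b hb hne
      have i1 := hθ a0 ha0 b hb
      have i2 := hθ b hb a0 ha0
      have h1 : (b.1 : ℕ) ≠ 0 := by
        intro hb1
        have hfst : b.1 = a0.1 := Fin.val_injective (by omega)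
        have hlt1 : ¬ a0.2 < b.2 := fun h => by
          have := i1.mpr h; rw [hfst] at this; exact lt_irrefl _ this
        have hlt2 : ¬ b.2 < a0.2 := fun h => by
          have := i2.mpr h; rw [hfst] at this; exact lt_irrefl _ this
        exact hne (Prod.ext hfst (le_antisymm (not_lt.mp hlt1) (not_lt.mp hlt2)))
      have hfst : a0.1 < b.1 := by
        rw [Fin.lt_def]; omega
      have := (i1.mp hfst)
      rw [Fin.lt_def] at this
      exact ⟨by omega, this⟩
    have ht : (a0.2 : ℕ) + 1 ≤ m := a0.2.isLt
    refine transfer_aux c p hn hm xf yf sy θ ((a0.2 : ℕ) + 1) ht ?_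
    intro a ha b hb
    have hlt0 := a0.2.isLt
    by_cases hae : a = a0 <;> by_cases hbe : b = a0
    · rw [hae, hbe]
      simp only [lt_self_iff_false]
    · obtain ⟨hb1, hb2⟩ := hgt b hb hbe
      have e1 : ((a.1 : ℕ) + (n - 1)) % n = n - 1 := by
        rw [hae, ha01, Nat.zero_add]; exact Nat.mod_eq_of_lt (by omega)
      have e2 : ((b.1 : ℕ) + (n - 1)) % n = (b.1 : ℕ) - 1 := mod_sub_helper b.1.isLt hb1
      have e3 : ((a.2 : ℕ) + (m - ((a0.2 : ℕ) + 1))) % m = m - 1 := by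
        rw [hae, show (a0.2 : ℕ) + (m - ((a0.2 : ℕ) + 1)) = m - 1 by omega]
        exact Nat.mod_eq_of_lt (by omega)
      have e4 : ((b.2 : ℕ) + (m - ((a0.2 : ℕ) + 1))) % m = (b.2 : ℕ) - ((a0.2 : ℕ) + 1) :=
        mod_sub_helper b.2.isLt hb2
      rw [e1, e2, e3, e4]
      have := b.1.isLt
      have := b.2.isLt
      omega
    · obtain ⟨hb1, hb2⟩ := hgt a ha hae
      have e1 : ((b.1 : ℕ) + (n - 1)) % n = n - 1 := by
        rw [hbe, ha01, Nat.zero_add]; exact Nat.mod_eq_of_lt (by omega)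
      have e2 : ((a.1 : ℕ) + (n - 1)) % n = (a.1 : ℕ) - 1 := mod_sub_helper a.1.isLt hb1
      have e3 : ((b.2 : ℕ) + (m - ((a0.2 : ℕ) + 1))) % m = m - 1 := by
        rw [hbe, show (a0.2 : ℕ) + (m - ((a0.2 : ℕ) + 1)) = m - 1 by omega]
        exact Nat.mod_eq_of_lt (by omega)
      have e4 : ((a.2 : ℕ) + (m - ((a0.2 : ℕ) + 1))) % m = (a.2 : ℕ) - ((a0.2 : ℕ) + 1) :=
        mod_sub_helper a.2.isLt hb2
      rw [e1, e2, e3, e4]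
      have := a.1.isLt
      have := a.2.isLt
      omega
    · obtain ⟨ha1, ha2⟩ := hgt a ha hae
      obtain ⟨hb1, hb2⟩ := hgt b hb hbe
      have e1 : ((a.1 : ℕ) + (n - 1)) % n = (a.1 : ℕ) - 1 := mod_sub_helper a.1.isLt ha1
      have e2 : ((b.1 : ℕ) + (n - 1)) % n = (b.1 : ℕ) - 1 := mod_sub_helper b.1.isLt hb1
      have e3 : ((a.2 : ℕ) + (m - ((a0.2 : ℕ) + 1))) % m = (a.2 : ℕ) - ((a0.2 : ℕ) + 1) :=
        mod_sub_helper a.2.isLt ha2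
      have e4 : ((b.2 : ℕ) + (m - ((a0.2 : ℕ) + 1))) % m = (b.2 : ℕ) - ((a0.2 : ℕ) + 1) :=
        mod_sub_helper b.2.isLt hb2
      rw [e1, e2, e3, e4]
      have hiff := hθ a ha b hb
      rw [Fin.lt_def, Fin.lt_def] at hiff
      omega
  · push_neg at h0
    refine transfer_aux c p hn hm xf yf sy θ 0 (Nat.zero_le _) ?_
    intro a ha b hb
    have ha1 : 0 < (a.1 : ℕ) := Nat.pos_of_ne_zero (h0 a ha)
    have hb1 : 0 < (b.1 : ℕ) := Nat.pos_of_ne_zero (h0 b hb)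
    have e1 : ((a.1 : ℕ) + (n - 1)) % n = (a.1 : ℕ) - 1 := mod_sub_helper a.1.isLt ha1
    have e2 : ((b.1 : ℕ) + (n - 1)) % n = (b.1 : ℕ) - 1 := mod_sub_helper b.1.isLt hb1
    have e3 : ((a.2 : ℕ) + (m - 0)) % m = (a.2 : ℕ) - 0 :=
      mod_sub_helper a.2.isLt (Nat.zero_le _)
    have e4 : ((b.2 : ℕ) + (m - 0)) % m = (b.2 : ℕ) - 0 :=
      mod_sub_helper b.2.isLt (Nat.zero_le _)
    rw [e1, e2, e3, e4]
    have hiff := hθ a ha b hb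
    rw [Fin.lt_def, Fin.lt_def] at hiff
    omega
end

section
/- For any nonempty finite sequences x and y of points in a metric space (E, d), any c > 0 and any 1 ≤ p < ∞, the cyclic SOSPA satisfies d_SOSPA^{(c,p)}([x], [y]) = min_{s_y ∈ {0,…,|y|−1}} d_SOSPA^{(c,p)}(x, S_{s_y}(y)); that is, minimizing over cyclic shifts of y alone, with x fixed, achieves the minimum over all pairs of cyclic shifts of x and y. -/
open scoped BigOperators

instance instNEOA {n m : ℕ} : Nonempty {θ : Finset (Fin n × Fin m) // IsOrderedAssignment θ} :=
  ⟨⟨∅, by intro a ha; exact absurd ha (Finset.notMem_empty a)⟩⟩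

lemma fin_sub_val {n : ℕ} (u w : Fin n) :
    ((u - w : Fin n) : ℕ) =
      if (w : ℕ) ≤ (u : ℕ) then (u : ℕ) - (w : ℕ) else (u : ℕ) + n - (w : ℕ) := by
  have hu := u.isLt
  have hw := w.isLt
  rw [Fin.sub_def]
  show (n - (w : ℕ) + (u : ℕ)) % n = _
  rcases le_or_gt (w : ℕ) (u : ℕ) with h | h
  · rw [if_pos h]
    have h1 : n - (w : ℕ) + (u : ℕ) = ((u : ℕ) - (w : ℕ)) + n := by omega
    rw [h1, Nat.add_mod_right, Nat.mod_eq_of_lt (by omega)]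
  · rw [if_neg (not_le.mpr h), Nat.mod_eq_of_lt (by omega)]
    omega

lemma shift_zero {E : Type*} (x : Polyline E) : shift 0 x = x := by
  obtain ⟨n, f⟩ := x
  exact congrArg (Sigma.mk n) (funext fun i =>
    congrArg f (Fin.eq_of_val_eq (by simp [Nat.mod_eq_of_lt i.isLt])))

lemma dSOSPA_le {E : Type*} [MetricSpace E] (c p : ℝ) (x y : Polyline E)
    (θ : Finset (Fin x.1 × Fin y.1)) (hθ : IsOrderedAssignment θ) :
    dSOSPA c p x y ≤ cost c p x y θ := by
  unfold dSOSPA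
  exact ciInf_le ((Set.finite_range _).bddBelow)
    (⟨θ, hθ⟩ : {θ : Finset (Fin x.1 × Fin y.1) // IsOrderedAssignment θ})

/-- The cyclic SOSPA (minimum over all pairs of cyclic shifts of `x` and
`y`) equals the minimum over cyclic shifts of `y` alone, with `x` fixed. -/
theorem cyclic_dSOSPA_eq {E : Type*} [MetricSpace E] (c p : ℝ) (hc : 0 < c) (hp : 1 ≤ p)
    (x y : Polyline E) (hx : x.1 ≠ 0) (hy : y.1 ≠ 0) :
    (⨅ s : Fin x.1 × Fin y.1, dSOSPA c p (shift (s.1 : ℕ) x) (shift (s.2 : ℕ) y)) =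
      ⨅ sy : Fin y.1, dSOSPA c p x (shift (sy : ℕ) y) := by
  haveI : NeZero x.1 := ⟨hx⟩
  haveI : NeZero y.1 := ⟨hy⟩
  have hbddP : BddBelow (Set.range fun s : Fin x.1 × Fin y.1 =>
      dSOSPA c p (shift (s.1 : ℕ) x) (shift (s.2 : ℕ) y)) := (Set.finite_range _).bddBelow
  have hbddY : BddBelow (Set.range fun sy : Fin y.1 =>
      dSOSPA c p x (shift (sy : ℕ) y)) := (Set.finite_range _).bddBelow
  apply le_antisymm
  · refine le_ciInf fun sy => ?_
    have h0 : shift (((⟨0, Nat.pos_of_ne_zero hx⟩ : Fin x.1) : Fin x.1) : ℕ) x = x :=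
      shift_zero x
    calc (⨅ s : Fin x.1 × Fin y.1, dSOSPA c p (shift (s.1 : ℕ) x) (shift (s.2 : ℕ) y))
        ≤ dSOSPA c p (shift ((⟨0, Nat.pos_of_ne_zero hx⟩ : Fin x.1) : ℕ) x)
            (shift (sy : ℕ) y) := ciInf_le hbddP (⟨0, Nat.pos_of_ne_zero hx⟩, sy)
      _ = dSOSPA c p x (shift (sy : ℕ) y) := by rw [h0]
  · refine le_ciInf fun s => ?_
    obtain ⟨sx, sy⟩ := s
    have key : ∀ θ : Finset (Fin x.1 × Fin y.1), IsOrderedAssignment θ →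
        (⨅ sy' : Fin y.1, dSOSPA c p x (shift (sy' : ℕ) y)) ≤
          cost c p (shift (sx : ℕ) x) (shift (sy : ℕ) y) θ := ?_
    · exact le_ciInf fun θs => key θs.1 θs.2
    intro θ hθ
    rcases θ.eq_empty_or_nonempty with rfl | hne
    · calc (⨅ sy' : Fin y.1, dSOSPA c p x (shift (sy' : ℕ) y))
          ≤ dSOSPA c p x (shift (sy : ℕ) y) := ciInf_le hbddY sy
        _ ≤ cost c p x (shift (sy : ℕ) y) ∅ :=
            dSOSPA_le c p x _ ∅ (by intro a ha; exact absurd ha (Finset.notMem_empty a))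
        _ = cost c p (shift (sx : ℕ) x) (shift (sy : ℕ) y) ∅ := by rfl
    · obtain ⟨w, hw, hmin⟩ := θ.exists_min_image (fun q => ((q.1 + sx : Fin x.1) : ℕ)) hne
      obtain ⟨i₁, j₁⟩ := w
      have hφinj : Function.Injective
          (fun q : Fin x.1 × Fin y.1 => (q.1 + sx, q.2 - j₁)) := by
        intro a b h
        rw [Prod.ext_iff] at h ⊢
        refine ⟨add_right_cancel h.1, ?_⟩
        have h2 := h.2
        rwa [sub_left_inj] at h2
      -- orderedness of the image
      have hθ' : IsOrderedAssignment
          (θ.image (fun q : Fin x.1 × Fin y.1 => (q.1 + sx, q.2 - j₁))) := by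
        intro a ha b hb
        obtain ⟨pq, hpq, rfl⟩ := Finset.mem_image.mp ha
        obtain ⟨rs, hrs, rfl⟩ := Finset.mem_image.mp hb
        dsimp only
        rw [Fin.lt_def, Fin.lt_def]
        have hb1 := pq.1.isLt; have hb2 := pq.2.isLt
        have hb3 := rs.1.isLt; have hb4 := rs.2.isLt
        have h1 : ((pq.1 : ℕ) < (rs.1 : ℕ)) ↔ ((pq.2 : ℕ) < (rs.2 : ℕ)) := by
          have h := hθ _ hpq _ hrs; rwa [Fin.lt_def, Fin.lt_def] at h
        have h3 : ((i₁ : ℕ) < (pq.1 : ℕ)) ↔ ((j₁ : ℕ) < (pq.2 : ℕ)) := by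
          have h := hθ _ hw _ hpq; rwa [Fin.lt_def, Fin.lt_def] at h
        have h4 : ((pq.1 : ℕ) < (i₁ : ℕ)) ↔ ((pq.2 : ℕ) < (j₁ : ℕ)) := by
          have h := hθ _ hpq _ hw; rwa [Fin.lt_def, Fin.lt_def] at h
        have h5 : ((i₁ : ℕ) < (rs.1 : ℕ)) ↔ ((j₁ : ℕ) < (rs.2 : ℕ)) := by
          have h := hθ _ hw _ hrs; rwa [Fin.lt_def, Fin.lt_def] at h
        have h6 : ((rs.1 : ℕ) < (i₁ : ℕ)) ↔ ((rs.2 : ℕ) < (j₁ : ℕ)) := by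
          have h := hθ _ hrs _ hw; rwa [Fin.lt_def, Fin.lt_def] at h
        have hm1 : ((i₁ + sx : Fin x.1) : ℕ) ≤ ((pq.1 + sx : Fin x.1) : ℕ) := hmin _ hpq
        have hm2 : ((i₁ + sx : Fin x.1) : ℕ) ≤ ((rs.1 + sx : Fin x.1) : ℕ) := hmin _ hrs
        have e1 : ((pq.1 - i₁ : Fin x.1) : ℕ)
            = ((pq.1 + sx : Fin x.1) : ℕ) - ((i₁ + sx : Fin x.1) : ℕ) := by
          have h : (pq.1 - i₁ : Fin x.1) = (pq.1 + sx) - (i₁ + sx) :=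
            (add_sub_add_right_eq_sub _ _ _).symm
          rw [h, fin_sub_val, if_pos hm1]
        have e2 : ((rs.1 - i₁ : Fin x.1) : ℕ)
            = ((rs.1 + sx : Fin x.1) : ℕ) - ((i₁ + sx : Fin x.1) : ℕ) := by
          have h : (rs.1 - i₁ : Fin x.1) = (rs.1 + sx) - (i₁ + sx) :=
            (add_sub_add_right_eq_sub _ _ _).symm
          rw [h, fin_sub_val, if_pos hm2]
        have s1 := fin_sub_val pq.1 i₁
        have s2 := fin_sub_val rs.1 i₁
        have s3 := fin_sub_val pq.2 j₁
        have s4 := fin_sub_val rs.2 j₁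
        split_ifs at s1 s2 s3 s4 <;> omega
      -- pointwise cost transfer
      have hsum : ∑ ij ∈ (θ.image (fun q : Fin x.1 × Fin y.1 => (q.1 + sx, q.2 - j₁)) :
              Finset (Fin x.1 × Fin (shift ((j₁ + sy : Fin y.1) : ℕ) y).1)),
            dist (x.2 ij.1) ((shift ((j₁ + sy : Fin y.1) : ℕ) y).2 ij.2) ^ p
          = ∑ ij ∈ θ, dist ((shift (sx : ℕ) x).2 ij.1) ((shift (sy : ℕ) y).2 ij.2) ^ p := by
        refine Eq.trans (Finset.sum_image fun a _ b _ h => hφinj h) ?_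
        refine Finset.sum_congr rfl fun q hq => ?_
        have hxq : x.2 (q.1 + sx) = (shift (sx : ℕ) x).2 q.1 := by
          simp only [shift]
          exact congrArg x.2 (Fin.eq_of_val_eq (Fin.val_add _ _))
        have hyq : (shift ((j₁ + sy : Fin y.1) : ℕ) y).2 (q.2 - j₁)
            = (shift (sy : ℕ) y).2 q.2 := by
          simp only [shift]
          refine congrArg y.2 (Fin.eq_of_val_eq ?_)
          show (((q.2 - j₁ : Fin y.1) : ℕ) + ((j₁ + sy : Fin y.1) : ℕ)) % y.1
              = ((q.2 : ℕ) + (sy : ℕ)) % y.1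
          have h2 : (q.2 - j₁) + (j₁ + sy) = q.2 + sy := by abel
          rw [← Fin.val_add, h2, Fin.val_add]
        dsimp only
        rw [hxq, hyq]
      have hcard : (θ.image (fun q : Fin x.1 × Fin y.1 => (q.1 + sx, q.2 - j₁)) :
              Finset (Fin x.1 × Fin (shift ((j₁ + sy : Fin y.1) : ℕ) y).1)).card
          = θ.card := Finset.card_image_of_injective θ hφinj
      have hcost : cost c p x (shift ((j₁ + sy : Fin y.1) : ℕ) y)
            (θ.image (fun q : Fin x.1 × Fin y.1 => (q.1 + sx, q.2 - j₁)))
          = cost c p (shift (sx : ℕ) x) (shift (sy : ℕ) y) θ := by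
        unfold cost
        rw [hsum, hcard]
        rfl
      calc (⨅ sy' : Fin y.1, dSOSPA c p x (shift (sy' : ℕ) y))
          ≤ dSOSPA c p x (shift ((j₁ + sy : Fin y.1) : ℕ) y) := ciInf_le hbddY (j₁ + sy)
        _ ≤ cost c p x (shift ((j₁ + sy : Fin y.1) : ℕ) y)
              (θ.image (fun q : Fin x.1 × Fin y.1 => (q.1 + sx, q.2 - j₁))) :=
            dSOSPA_le c p x _ _ hθ'
        _ = cost c p (shift (sx : ℕ) x) (shift (sy : ℕ) y) θ := hcost
end
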